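/- Assume the misclassified probability mass satisfies Σ_{t∈R̂∩G} P(t) + Σ_{t∈Ĝ∩R} P(t) ≤ ε₁ with 0 ≤ ε₁ < 1, and |δ − δ̂| ≤ ε₂ with ε₂ ≥ 0. Then max{ |e^{δ}/A − 1| , |e^{−δ̂}/A − 1| } ≤ f₂(ε₁, ε₂). -/

import Mathlib

/-!
Write `a, b, c, d` for the masses of `R̂ ∩ R`, `R̂ ∩ G`, `Ĝ ∩ R`, `Ĝ ∩ G`, so that
`A = a + e^δ b + e^{-δ̂} c + e^{δ-δ̂} d` (this is `normalizer a b c d δ δhat`). Since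
`δ - δ̂ ≥ -ε₂`, the correctly classified mass `a + d ≥ 1 - ε₁` alone gives `A ≥ e^{-ε₂} (1 - ε₁)`. Scaling by `e^{δ̂ - δ - 2ε₂}` turns every
coefficient of `A` into at most `e^{-ε₂}`, except that of `b` which becomes at most `e^{δ-ε₂}`;
as `b ≤ ε₁`, this gives `A e^{δ̂ - δ - 2ε₂} ≤ (1 - ε₁) + ε₁ e^{δ-ε₂}`. Both ratios `e^{-δ̂}/A ≤ e^δ/A`
then lie between the two bounds.
-/

open Finset Real

namespace CrossListDeviation

lemma sum_compl_inter_add_sum_inter {V M : Type*} [Fintype V] [DecidableEq V]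
    [AddCommMonoid M] (s t : Finset V) (f : V → M) :
    ∑ x ∈ sᶜ ∩ tᶜ, f x + ∑ x ∈ sᶜ ∩ t, f x + ∑ x ∈ s ∩ tᶜ, f x + ∑ x ∈ s ∩ t, f x
      = ∑ x, f x := by
  have split (u : Finset V) : ∑ x ∈ u ∩ tᶜ, f x + ∑ x ∈ u ∩ t, f x = ∑ x ∈ u, f x := by
    rw [← sdiff_eq_inter_compl, add_comm, sum_inter_add_sum_sdiff]
  rw [add_assoc _ (∑ x ∈ s ∩ tᶜ, f x), split, split, sum_compl_add_sum]

lemma convex_comb_le_convex_comb {x y b ε : ℝ} (hxy : x ≤ y) (hb : b ≤ ε) :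
    (1 - b) * x + b * y ≤ (1 - ε) * x + ε * y := by
  nlinarith

noncomputable def normalizer (a b c d δ δhat : ℝ) : ℝ :=
  a + exp δ * b + exp (-δhat) * c + exp (δ - δhat) * d

variable {a b c d δ δhat ε₁ ε₂ : ℝ}

lemma exp_neg_mul_le_normalizer (ha : 0 ≤ a) (hb : 0 ≤ b) (hc : 0 ≤ c) (hd : 0 ≤ d)
    (had : 1 - ε₁ ≤ a + d) (hδδ : |δ - δhat| ≤ ε₂) :
    exp (-ε₂) * (1 - ε₁) ≤ normalizer a b c d δ δhat := by
  have hε₂ : 0 ≤ ε₂ := (abs_nonneg _).trans hδδ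
  have hlo := (abs_le.mp hδδ).1
  calc exp (-ε₂) * (1 - ε₁) ≤ exp (-ε₂) * (a + d) := by gcongr
    _ = exp (-ε₂) * a + exp (-ε₂) * d := by ring
    _ ≤ 1 * a + exp (δ - δhat) * d := by
      gcongr
      exact exp_le_one_iff.mpr (by linarith)
    _ ≤ normalizer a b c d δ δhat := by
      unfold normalizer
      linarith [mul_nonneg (exp_pos δ).le hb, mul_nonneg (exp_pos (-δhat)).le hc]

lemma normalizer_mul_exp_le (ha : 0 ≤ a) (hb : 0 ≤ b) (hc : 0 ≤ c) (hd : 0 ≤ d)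
    (hsum : a + b + c + d = 1) (hbε : b ≤ ε₁) (hε₁ : ε₁ ≤ 1) (hδ : 0 ≤ δ)
    (hδδ : |δ - δhat| ≤ ε₂) :
    normalizer a b c d δ δhat * exp (δhat - δ - 2 * ε₂) ≤ (1 - ε₁) + ε₁ * exp (δ - ε₂) := by
  have hε₂ : 0 ≤ ε₂ := (abs_nonneg _).trans hδδ
  obtain ⟨hlo, hhi⟩ := abs_le.mp hδδ
  calc normalizer a b c d δ δhat * exp (δhat - δ - 2 * ε₂)
        = exp (δhat - δ - 2 * ε₂) * a + exp (δ + (δhat - δ - 2 * ε₂)) * b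
          + exp (-δhat + (δhat - δ - 2 * ε₂)) * c
          + exp (δ - δhat + (δhat - δ - 2 * ε₂)) * d := by
          simp only [normalizer, exp_add]; ring
    _ ≤ exp (-ε₂) * a + exp (δ - ε₂) * b + exp (-ε₂) * c + exp (-ε₂) * d := by
      gcongr <;> linarith
    _ = (1 - b) * exp (-ε₂) + b * exp (δ - ε₂) := by
      rw [show 1 - b = a + c + d by linarith]; ring
    _ ≤ (1 - ε₁) * exp (-ε₂) + ε₁ * exp (δ - ε₂) :=
      convex_comb_le_convex_comb (exp_le_exp.mpr (by linarith)) hbε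
    _ ≤ (1 - ε₁) * 1 + ε₁ * exp (δ - ε₂) := by
      gcongr
      exact exp_le_one_iff.mpr (by linarith)
    _ = (1 - ε₁) + ε₁ * exp (δ - ε₂) := by ring

theorem max_abs_div_normalizer_sub_one_le (ha : 0 ≤ a) (hb : 0 ≤ b) (hc : 0 ≤ c)
    (hd : 0 ≤ d) (hsum : a + b + c + d = 1) (hmis : b + c ≤ ε₁) (hε₁ : ε₁ < 1)
    (hδ : 0 < δ) (hδhat : 0 < δhat) (hδδ : |δ - δhat| ≤ ε₂) :
    max |exp δ / normalizer a b c d δ δhat - 1| |exp (-δhat) / normalizer a b c d δ δhat - 1|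
      ≤ max (exp (δ + 2 * ε₂) / (1 - ε₁) - 1)
          (1 - exp (-(δ + 2 * ε₂)) / ((1 - ε₁) + ε₁ * exp (δ - ε₂))) := by
  set A := normalizer a b c d δ δhat
  set D := (1 - ε₁) + ε₁ * exp (δ - ε₂)
  have hε₂ : 0 ≤ ε₂ := (abs_nonneg _).trans hδδ
  have hε₁0 : 0 ≤ ε₁ := by linarith
  have hε₁' : 0 < 1 - ε₁ := by linarith
  have hL : exp (-ε₂) * (1 - ε₁) ≤ A := exp_neg_mul_le_normalizer ha hb hc hd (by linarith) hδδ
  have hA : 0 < A := lt_of_lt_of_le (by positivity) hL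
  have hD : 0 < D := by positivity
  have hU : A * exp (δhat - δ - 2 * ε₂) ≤ D :=
    normalizer_mul_exp_le ha hb hc hd hsum (by linarith) hε₁.le hδ.le hδδ
  have hratios : exp (-δhat) / A ≤ exp δ / A := by gcongr; linarith
  have hupper : exp δ / A - 1 ≤ exp (δ + 2 * ε₂) / (1 - ε₁) - 1 := by
    calc exp δ / A - 1 ≤ exp δ / (exp (-ε₂) * (1 - ε₁)) - 1 := by gcongr
      _ = exp (δ + ε₂) / (1 - ε₁) - 1 := by
        rw [← div_div, ← exp_sub, sub_neg_eq_add]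
      _ ≤ exp (δ + 2 * ε₂) / (1 - ε₁) - 1 := by gcongr; linarith
  have hlower : 1 - exp (-δhat) / A ≤ 1 - exp (-(δ + 2 * ε₂)) / D := by
    rw [sub_le_sub_iff_left, div_le_div_iff₀ hD hA]
    calc exp (-(δ + 2 * ε₂)) * A = exp (-δhat) * (A * exp (δhat - δ - 2 * ε₂)) := by
          rw [mul_left_comm, ← exp_add]; ring_nf
      _ ≤ exp (-δhat) * D := by gcongr
  have hbound : max (exp δ / A - 1) (1 - exp (-δhat) / A)
      ≤ max (exp (δ + 2 * ε₂) / (1 - ε₁) - 1) (1 - exp (-(δ + 2 * ε₂)) / D) :=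
    max_le_max hupper hlower
  exact max_le ((abs_sub_le_max_sub hratios le_rfl 1).trans hbound)
    ((abs_sub_le_max_sub le_rfl hratios 1).trans hbound)

end CrossListDeviation

open CrossListDeviation in
theorem cross_list_deviation_bound_general
    {V : Type*} [Fintype V] [DecidableEq V]
    (P : V → ℝ) (G Ghat : Finset V) (δ δhat : ℝ)
    (hP0 : ∀ t, 0 ≤ P t) (hP1 : ∑ t, P t = 1) (hδ : 0 < δ) (hδhat : 0 < δhat)
    (A : ℝ)
    (hA : A = ∑ t ∈ Ghatᶜ ∩ Gᶜ, P t + Real.exp δ * ∑ t ∈ Ghatᶜ ∩ G, P t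
        + Real.exp (-δhat) * ∑ t ∈ Ghat ∩ Gᶜ, P t
        + Real.exp (δ - δhat) * ∑ t ∈ Ghat ∩ G, P t)
    (ε₁ ε₂ : ℝ) (hε₁1 : ε₁ < 1)
    (hmis : ∑ t ∈ Ghatᶜ ∩ G, P t + ∑ t ∈ Ghat ∩ Gᶜ, P t ≤ ε₁)
    (hδδ : |δ - δhat| ≤ ε₂) :
    max |Real.exp δ / A - 1| |Real.exp (-δhat) / A - 1|
      ≤ max (Real.exp (δ + 2 * ε₂) / (1 - ε₁) - 1)
          (1 - Real.exp (-(δ + 2 * ε₂)) / ((1 - ε₁) + ε₁ * Real.exp (δ - ε₂))) := by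
  have hmass (s : Finset V) : 0 ≤ ∑ t ∈ s, P t := sum_nonneg fun t _ => hP0 t
  subst hA
  exact max_abs_div_normalizer_sub_one_le (hmass _) (hmass _) (hmass _) (hmass _)
    ((sum_compl_inter_add_sum_inter Ghat G P).trans hP1) hmis hε₁1 hδ hδhat hδδ

/-- Bound on the cross-list multiplicative deviation by `f₂(ε₁, ε₂)`. -/
theorem cross_list_deviation_bound
    {V : Type*} [Fintype V] [DecidableEq V]
    (P : V → ℝ) (G Ghat : Finset V) (δ δhat : ℝ)
    (hP0 : ∀ t, 0 ≤ P t) (hP1 : ∑ t, P t = 1) (hδ : 0 < δ) (hδhat : 0 < δhat)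
    (A : ℝ)
    (hA : A = ∑ t ∈ Ghatᶜ ∩ Gᶜ, P t + Real.exp δ * ∑ t ∈ Ghatᶜ ∩ G, P t
        + Real.exp (-δhat) * ∑ t ∈ Ghat ∩ Gᶜ, P t
        + Real.exp (δ - δhat) * ∑ t ∈ Ghat ∩ G, P t)
    (ε₁ ε₂ : ℝ) (hε₁0 : 0 ≤ ε₁) (hε₁1 : ε₁ < 1) (hε₂0 : 0 ≤ ε₂)
    (hmis : ∑ t ∈ Ghatᶜ ∩ G, P t + ∑ t ∈ Ghat ∩ Gᶜ, P t ≤ ε₁)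
    (hδδ : |δ - δhat| ≤ ε₂) :
    max |Real.exp δ / A - 1| |Real.exp (-δhat) / A - 1|
      ≤ max (Real.exp (δ + 2 * ε₂) / (1 - ε₁) - 1)
          (1 - Real.exp (-(δ + 2 * ε₂)) / ((1 - ε₁) + ε₁ * Real.exp (δ - ε₂))) :=
  cross_list_deviation_bound_general P G Ghat δ δhat hP0 hP1 hδ hδhat A hA ε₁ ε₂ hε₁1 hmis hδδ
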